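/- (Equation (3.61)/(3.57).) For every μ₁ ∈ [0,1], with μ₂ := 1−μ₁: ∫_{ℝ²}∫_{ℝ²}∫_{ℝ²} (Σψ_in)(q₁,q₂)·(Σψ_in)(q₃,q₂)·ψ_in(q₁,q₃) dq₁ dq₂ dq₃ = J(μ₁,μ₂)/π³. -/

import Mathlib

open MeasureTheory

noncomputable abbrev R2 : Type := EuclideanSpace ℝ (Fin 2)

/-- The modified Bessel function of order zero. -/
noncomputable def I0 (x : ℝ) : ℝ :=
  (1 / Real.pi) * ∫ θ in (0:ℝ)..Real.pi, Real.exp (x * Real.cos θ)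

/-- The function `J(μ₁,μ₂)` of (3.65). -/
noncomputable def Jfun (μ₁ μ₂ : ℝ) : ℝ :=
  ∫ q₂ : R2, (∫ q₁ : R2,
    Real.exp (-(1/2) * (μ₁ ^ 2 + μ₂ ^ 2) * ‖q₁ + q₂‖ ^ 2
        - ‖μ₂ • q₁ - μ₁ • q₂‖ ^ 2 - ‖q₁‖ ^ 2 / 2) *
      I0 (|μ₁ - μ₂| * ‖q₁ + q₂‖ * ‖μ₂ • q₁ - μ₁ • q₂‖)) ^ 2

/-- The unit vector `(cos θ, sin θ)` in `ℝ²`. -/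
noncomputable def unitVec (θ : ℝ) : R2 :=
  (WithLp.equiv 2 (Fin 2 → ℝ)).symm ![Real.cos θ, Real.sin θ]

/-- The Gaussian `ψ(q) = π^{-1/2} e^{-|q|²/2}`. -/
noncomputable def psi (q : R2) : ℝ := (1 / Real.sqrt Real.pi) * Real.exp (-‖q‖ ^ 2 / 2)

/-- The angular average `(Σψ_in)(q₁,q₂)`, with `q_cm = q₁+q₂` and `q = μ₂q₁-μ₁q₂`. -/
noncomputable def SigmaPsi (μ₁ : ℝ) (q₁ q₂ : R2) : ℝ :=
  (1 / (2 * Real.pi)) * ∫ θ in (0:ℝ)..(2 * Real.pi),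
    psi (μ₁ • (q₁ + q₂) + ‖(1 - μ₁) • q₁ - μ₁ • q₂‖ • unitVec θ) *
      psi ((1 - μ₁) • (q₁ + q₂) - ‖(1 - μ₁) • q₁ - μ₁ • q₂‖ • unitVec θ)

open Real InnerProductSpace

/-! Writing `u_θ = unitVec θ`, one has
`‖μ₁Q + r u_θ‖² + ‖μ₂Q - r u_θ‖² = (μ₁² + μ₂²)‖Q‖² + 2r² + 2(μ₁ - μ₂) r ⟪Q, u_θ⟫`,
so the integrand of `SigmaPsi` is a Gaussian in `‖Q‖, r` times `exp ⟪v, u_θ⟫`, and the circle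
average of `exp ⟪v, u_θ⟫` is `I₀ ‖v‖`. Hence `Σψ_in(q₁,q₂) ψ(q₁)` is `π^{-3/2}` times the
integrand `K(q₁,q₂)` of `J`, and for fixed `q₂` the `(q₁,q₃)`-integral of `K(q₁,q₂) K(q₃,q₂)`
factorises. Fubini applies because `I₀ x ≤ exp |x|` gives a Gaussian bound on `K`. -/

theorem continuous_I0 : Continuous I0 :=
  continuous_const.mul
    (intervalIntegral.continuous_parametric_intervalIntegral_of_continuous' (by fun_prop) _ _)

theorem I0_nonneg (x : ℝ) : 0 ≤ I0 x :=
  mul_nonneg (by positivity)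
    (intervalIntegral.integral_nonneg pi_pos.le fun _ _ => (exp_pos _).le)

theorem I0_le_exp_abs (x : ℝ) : I0 x ≤ exp |x| := by
  have hle : ∫ θ in (0:ℝ)..π, exp (x * cos θ) ≤ ∫ _ in (0:ℝ)..π, exp |x| := by
    refine intervalIntegral.integral_mono_on pi_pos.le
      ((by fun_prop : Continuous _).intervalIntegrable _ _) intervalIntegrable_const fun θ _ => ?_
    refine exp_le_exp.2 ((le_abs_self _).trans ?_)
    rw [abs_mul]
    exact mul_le_of_le_one_right (abs_nonneg x) (abs_cos_le_one θ)
  rw [intervalIntegral.integral_const, smul_eq_mul, sub_zero] at hle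
  rw [I0, one_div, inv_mul_le_iff₀ pi_pos]
  exact hle

theorem integral_exp_mul_cos_zero_two_pi (x : ℝ) :
    ∫ θ in (0:ℝ)..2 * π, exp (x * cos θ) = 2 * π * I0 x := by
  have hsymm : ∫ θ in π..2 * π, exp (x * cos θ) = ∫ θ in (0:ℝ)..π, exp (x * cos θ) := by
    have h := intervalIntegral.integral_comp_sub_left (fun θ => exp (x * cos θ)) (2 * π)
      (a := 0) (b := π)
    simp only [cos_two_pi_sub, sub_zero] at h
    rwa [show 2 * π - π = π by ring, eq_comm] at h
  rw [← intervalIntegral.integral_add_adjacent_intervals (b := π)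
    ((by fun_prop : Continuous _).intervalIntegrable _ _)
    ((by fun_prop : Continuous _).intervalIntegrable _ _),
    hsymm, I0]
  field_simp
  ring

theorem norm_unitVec (θ : ℝ) : ‖unitVec θ‖ = 1 := by
  simp [EuclideanSpace.norm_eq, unitVec, Fin.sum_univ_two]

theorem exists_inner_unitVec_eq (v : R2) :
    ∃ φ : ℝ, ∀ θ, ⟪v, unitVec θ⟫_ℝ = ‖v‖ * cos (θ - φ) := by
  set z : ℂ := ⟨v 0, v 1⟩
  have hz : ‖z‖ = ‖v‖ := by
    simp [Complex.norm_def, Complex.normSq_apply, EuclideanSpace.norm_eq, Fin.sum_univ_two, z, sq]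
  refine ⟨z.arg, fun θ => ?_⟩
  have h0 : v 0 = ‖v‖ * cos z.arg := by rw [← hz, Complex.norm_mul_cos_arg]
  have h1 : v 1 = ‖v‖ * sin z.arg := by rw [← hz, Complex.norm_mul_sin_arg]
  simp only [PiLp.inner_apply, unitVec, Fin.sum_univ_two, RCLike.inner_apply, conj_trivial,
    WithLp.equiv_symm_apply, Matrix.cons_val_zero, Matrix.cons_val_one, Matrix.cons_val_fin_one,
    h0, h1, cos_sub]
  ring

theorem integral_exp_inner_unitVec (v : R2) :
    ∫ θ in (0:ℝ)..2 * π, exp ⟪v, unitVec θ⟫_ℝ = 2 * π * I0 ‖v‖ := by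
  obtain ⟨φ, hφ⟩ := exists_inner_unitVec_eq v
  have hper : Function.Periodic (fun θ => exp (‖v‖ * cos θ)) (2 * π) :=
    fun θ => by simp [cos_add_two_pi]
  simp only [hφ]
  rw [intervalIntegral.integral_comp_sub_right (fun θ => exp (‖v‖ * cos θ)),
    zero_sub, sub_eq_neg_add, hper.intervalIntegral_add_eq (-φ) 0, zero_add,
    integral_exp_mul_cos_zero_two_pi]

theorem norm_smul_add_sq_add_norm_smul_sub_sq {E : Type*} [NormedAddCommGroup E]
    [InnerProductSpace ℝ E] (μ₁ μ₂ : ℝ) (Q u : E) :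
    ‖μ₁ • Q + u‖ ^ 2 + ‖μ₂ • Q - u‖ ^ 2
      = (μ₁ ^ 2 + μ₂ ^ 2) * ‖Q‖ ^ 2 + 2 * ‖u‖ ^ 2 + 2 * (μ₁ - μ₂) * ⟪Q, u⟫_ℝ := by
  rw [norm_add_sq_real, norm_sub_sq_real, real_inner_smul_left, real_inner_smul_left,
    norm_smul, norm_smul, mul_pow, mul_pow, Real.norm_eq_abs, Real.norm_eq_abs, sq_abs, sq_abs]
  ring

theorem psi_mul_psi (a b : R2) : psi a * psi b = π⁻¹ * exp (-(‖a‖ ^ 2 + ‖b‖ ^ 2) / 2) := by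
  have hπ : π⁻¹ = (√π)⁻¹ * (√π)⁻¹ := by rw [← mul_inv, mul_self_sqrt pi_pos.le]
  rw [psi, psi, neg_add, add_div, exp_add, hπ]
  ring

theorem psi_smul_add_mul_psi_smul_sub (μ₁ μ₂ r θ : ℝ) (Q : R2) :
    psi (μ₁ • Q + r • unitVec θ) * psi (μ₂ • Q - r • unitVec θ)
      = π⁻¹ * exp (-(1 / 2) * (μ₁ ^ 2 + μ₂ ^ 2) * ‖Q‖ ^ 2 - r ^ 2)
          * exp ⟪((μ₂ - μ₁) * r) • Q, unitVec θ⟫_ℝ := by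
  rw [psi_mul_psi, norm_smul_add_sq_add_norm_smul_sub_sq, mul_assoc π⁻¹, ← exp_add, norm_smul,
    norm_unitVec, real_inner_smul_left, real_inner_smul_right, Real.norm_eq_abs, mul_one, sq_abs]
  ring_nf

theorem angular_average_psi_mul_psi (μ₁ μ₂ : ℝ) {r : ℝ} (hr : 0 ≤ r) (Q : R2) :
    1 / (2 * π) * ∫ θ in (0:ℝ)..2 * π, psi (μ₁ • Q + r • unitVec θ) * psi (μ₂ • Q - r • unitVec θ)
      = π⁻¹ * exp (-(1 / 2) * (μ₁ ^ 2 + μ₂ ^ 2) * ‖Q‖ ^ 2 - r ^ 2)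
          * I0 (|μ₁ - μ₂| * ‖Q‖ * r) := by
  simp_rw [psi_smul_add_mul_psi_smul_sub]
  rw [intervalIntegral.integral_const_mul, integral_exp_inner_unitVec, norm_smul,
    Real.norm_eq_abs, abs_mul, abs_sub_comm, abs_of_nonneg hr]
  field_simp

theorem sigmaPsi_eq (μ₁ : ℝ) (q₁ q₂ : R2) :
    SigmaPsi μ₁ q₁ q₂ = π⁻¹ * exp (-(1 / 2) * (μ₁ ^ 2 + (1 - μ₁) ^ 2) * ‖q₁ + q₂‖ ^ 2
        - ‖(1 - μ₁) • q₁ - μ₁ • q₂‖ ^ 2)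
      * I0 (|μ₁ - (1 - μ₁)| * ‖q₁ + q₂‖ * ‖(1 - μ₁) • q₁ - μ₁ • q₂‖) :=
  angular_average_psi_mul_psi μ₁ (1 - μ₁) (norm_nonneg _) (q₁ + q₂)

noncomputable def jIntegrand (μ₁ μ₂ : ℝ) (p : R2 × R2) : ℝ :=
  exp (-(1/2) * (μ₁ ^ 2 + μ₂ ^ 2) * ‖p.1 + p.2‖ ^ 2
      - ‖μ₂ • p.1 - μ₁ • p.2‖ ^ 2 - ‖p.1‖ ^ 2 / 2) *
    I0 (|μ₁ - μ₂| * ‖p.1 + p.2‖ * ‖μ₂ • p.1 - μ₁ • p.2‖)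

theorem jfun_eq_integral_sq_integral_jIntegrand (μ₁ μ₂ : ℝ) :
    Jfun μ₁ μ₂ = ∫ q₂ : R2, (∫ q₁ : R2, jIntegrand μ₁ μ₂ (q₁, q₂)) ^ 2 := rfl

theorem sigmaPsi_mul_psi (μ₁ : ℝ) (q₁ q₂ : R2) :
    SigmaPsi μ₁ q₁ q₂ * psi q₁ = jIntegrand μ₁ (1 - μ₁) (q₁, q₂) / (π * √π) := by
  rw [sigmaPsi_eq, psi, jIntegrand, exp_sub _ (‖q₁‖ ^ 2 / 2), neg_div, exp_neg]
  field_simp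

section Fubini
variable {α β : Type*} [MeasurableSpace α] [MeasurableSpace β] {μ : Measure α} {ν : Measure β}

theorem integral_mul_slices_eq_integral_sq [SFinite μ] [SFinite ν] {G : α × β → ℝ}
    (hG : Integrable (fun x : α × β × α => G (x.1, x.2.1) * G (x.2.2, x.2.1)) (μ.prod (ν.prod μ))) :
    ∫ x, G (x.1, x.2.1) * G (x.2.2, x.2.1) ∂μ.prod (ν.prod μ) = ∫ y, (∫ x, G (x, y) ∂μ) ^ 2 ∂ν := by
  let e : β × α × α ≃ᵐ α × β × α := MeasurableEquiv.prodAssoc.symm.trans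
    ((MeasurableEquiv.prodComm.prodCongr (MeasurableEquiv.refl α)).trans MeasurableEquiv.prodAssoc)
  have he : MeasurePreserving e (ν.prod (μ.prod μ)) (μ.prod (ν.prod μ)) :=
    (measurePreserving_prodAssoc μ ν μ).comp
      ((Measure.measurePreserving_swap.prod (MeasurePreserving.id μ)).comp
        (measurePreserving_prodAssoc ν μ μ).symm)
  refine (he.integral_comp' _).symm.trans ?_
  have hGe : Integrable (fun x => G ((e x).1, (e x).2.1) * G ((e x).2.2, (e x).2.1))
      (ν.prod (μ.prod μ)) := (he.integrable_comp_emb e.measurableEmbedding).2 hG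
  rw [integral_prod _ hGe]
  congr! 2 with y
  exact (integral_prod_mul (fun x => G (x, y)) fun z => G (z, y)).trans (sq _).symm

theorem integrable_mul_slices_of_abs_le {G : α × β → ℝ} (hG : StronglyMeasurable G)
    {b₁ : α → ℝ} {b₂ : β → ℝ} (hb₁ : Integrable b₁ μ) (hb₂ : Integrable (fun y => b₂ y ^ 2) ν)
    (hle : ∀ p, |G p| ≤ b₁ p.1 * b₂ p.2) :
    Integrable (fun x : α × β × α => G (x.1, x.2.1) * G (x.2.2, x.2.1)) (μ.prod (ν.prod μ)) := by
  refine (hb₁.mul_prod (hb₂.mul_prod hb₁)).mono'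
    ((hG.comp_measurable (by fun_prop)).mul (hG.comp_measurable (by fun_prop))).aestronglyMeasurable
    (ae_of_all _ fun x => ?_)
  rw [norm_mul, Real.norm_eq_abs, Real.norm_eq_abs]
  calc |G (x.1, x.2.1)| * |G (x.2.2, x.2.1)| ≤ (b₁ x.1 * b₂ x.2.1) * (b₁ x.2.2 * b₂ x.2.1) :=
        mul_le_mul (hle _) (hle _) (abs_nonneg _) ((abs_nonneg _).trans (hle (x.1, x.2.1)))
    _ = b₁ x.1 * (b₂ x.2.1 ^ 2 * b₁ x.2.2) := by ring

end Fubini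

theorem integrable_exp_neg_mul_sq_norm {V : Type*} [NormedAddCommGroup V] [InnerProductSpace ℝ V]
    [FiniteDimensional ℝ V] [MeasurableSpace V] [BorelSpace V] {b : ℝ} (hb : 0 < b) :
    Integrable fun v : V => exp (-b * ‖v‖ ^ 2) := by
  refine (GaussianFourier.integrable_cexp_neg_mul_sq_norm_add (V := V) (b := b)
    (by simpa using hb) 0 0).norm.congr (ae_of_all _ fun v => ?_)
  simp [Complex.norm_exp, ← Complex.ofReal_pow]

theorem continuous_jIntegrand (μ₁ μ₂ : ℝ) : Continuous (jIntegrand μ₁ μ₂) :=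
  (by fun_prop : Continuous _).mul (continuous_I0.comp (by fun_prop))

theorem jIntegrand_nonneg (μ₁ μ₂ : ℝ) (p : R2 × R2) : 0 ≤ jIntegrand μ₁ μ₂ p :=
  mul_nonneg (exp_pos _).le (I0_nonneg _)

theorem jIntegrand_le {μ₁ μ₂ : ℝ} (h : μ₁ + μ₂ = 1) (p : R2 × R2) :
    jIntegrand μ₁ μ₂ p ≤ exp (-(1 / 4) * ‖p.1‖ ^ 2) * exp (-(1 / 8) * ‖p.2‖ ^ 2) := by
  set X := ‖p.1 + p.2‖
  set Y := ‖μ₂ • p.1 - μ₁ • p.2‖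
  set d := |μ₁ - μ₂|
  have hd : d ^ 2 = 2 * (μ₁ ^ 2 + μ₂ ^ 2) - 1 := by
    rw [sq_abs]; linear_combination (-(1 + μ₁ + μ₂)) * h
  have htri : ‖p.2‖ ≤ X + ‖p.1‖ := by
    simpa using norm_sub_le (p.1 + p.2) p.1
  have hn₂ : ‖p.2‖ ^ 2 ≤ 2 * X ^ 2 + 2 * ‖p.1‖ ^ 2 := by
    nlinarith [norm_nonneg p.2, sq_nonneg (X - ‖p.1‖)]
  calc jIntegrand μ₁ μ₂ p
      ≤ exp (-(1/2) * (μ₁ ^ 2 + μ₂ ^ 2) * X ^ 2 - Y ^ 2 - ‖p.1‖ ^ 2 / 2) * exp (d * X * Y) := by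
        refine mul_le_mul_of_nonneg_left ((I0_le_exp_abs _).trans_eq ?_) (exp_pos _).le
        rw [abs_of_nonneg (by positivity)]
    _ ≤ exp (-(1 / 4) * ‖p.1‖ ^ 2) * exp (-(1 / 8) * ‖p.2‖ ^ 2) := by
        -- AM-GM on `d X Y` and `hd` bound the exponent by `-X²/4 - ‖p.1‖²/2`
        rw [← exp_add, ← exp_add, exp_le_exp]
        nlinarith [sq_nonneg (d * X - 2 * Y)]

theorem integrable_jIntegrand_mul_slices {μ₁ μ₂ : ℝ} (h : μ₁ + μ₂ = 1) :
    Integrable fun x : R2 × R2 × R2 =>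
      jIntegrand μ₁ μ₂ (x.1, x.2.1) * jIntegrand μ₁ μ₂ (x.2.2, x.2.1) := by
  have hb₂ : (fun v : R2 => exp (-(1 / 8) * ‖v‖ ^ 2) ^ 2) = fun v => exp (-(1 / 4) * ‖v‖ ^ 2) := by
    ext v; rw [← exp_nat_mul]; ring_nf
  refine integrable_mul_slices_of_abs_le (μ := volume) (ν := volume)
    (continuous_jIntegrand μ₁ μ₂).stronglyMeasurable
    (integrable_exp_neg_mul_sq_norm (b := 1 / 4) (by norm_num))
    (by rw [hb₂]; exact integrable_exp_neg_mul_sq_norm (by norm_num)) fun p => ?_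
  rw [abs_of_nonneg (jIntegrand_nonneg μ₁ μ₂ p)]
  exact jIntegrand_le h p

theorem sigma_psi_triple_integral_eq_J_general (μ₁ : ℝ) :
    (∫ x : R2 × R2 × R2,
        SigmaPsi μ₁ x.1 x.2.1 * SigmaPsi μ₁ x.2.2 x.2.1 * (psi x.1 * psi x.2.2))
      = Jfun μ₁ (1 - μ₁) / Real.pi ^ 3 := by
  have hintegrand (x : R2 × R2 × R2) :
      SigmaPsi μ₁ x.1 x.2.1 * SigmaPsi μ₁ x.2.2 x.2.1 * (psi x.1 * psi x.2.2)
        = jIntegrand μ₁ (1 - μ₁) (x.1, x.2.1) * jIntegrand μ₁ (1 - μ₁) (x.2.2, x.2.1) / π ^ 3 := by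
    rw [mul_mul_mul_comm, sigmaPsi_mul_psi, sigmaPsi_mul_psi, div_mul_div_comm, ← sq, mul_pow,
      sq_sqrt pi_pos.le]
    ring
  simp_rw [hintegrand]
  rw [integral_div, jfun_eq_integral_sq_integral_jIntegrand,
    ← integral_mul_slices_eq_integral_sq (integrable_jIntegrand_mul_slices (add_sub_cancel μ₁ 1))]
  rfl

/-- Equation (3.61)/(3.57):
`∫∫∫ (Σψ_in)(q₁,q₂) (Σψ_in)(q₃,q₂) ψ_in(q₁,q₃) dq₁ dq₂ dq₃ = J(μ₁,μ₂)/π³`,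
where `x.1 = q₁`, `x.2.1 = q₂`, `x.2.2 = q₃`. -/
theorem sigma_psi_triple_integral_eq_J (μ₁ : ℝ) (hμ : μ₁ ∈ Set.Icc (0:ℝ) 1) :
    (∫ x : R2 × R2 × R2,
        SigmaPsi μ₁ x.1 x.2.1 * SigmaPsi μ₁ x.2.2 x.2.1 * (psi x.1 * psi x.2.2))
      = Jfun μ₁ (1 - μ₁) / Real.pi ^ 3 :=
  sigma_psi_triple_integral_eq_J_general μ₁
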